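/- Let a ≥ 1 be an integer and α = [a; a, a, ...] = (a + √(a²+4))/2, with continued fraction convergents pₙ/qₙ satisfying qₙ = pₙ₋₁. Setting xₙ = qₙ₊₁, yₙ = qₙ, zₙ = qₙ₋₁, one has |xₙ² − aα yₙ² − α² zₙ²| ≤ (α + ᾱ)/(qₙ·qₙ₋₁·Bₙ·Bₙ₋₁), where ᾱ = (a − √(a²+4))/2 is the algebraic conjugate of α and Bₙ = |ᾱ − pₙ/qₙ|. -/

import Mathlib

/-!
The roots `α, ᾱ'` of `x² = a x + 1` satisfy `α + ᾱ' = a` and `α ᾱ' = -1`, and the recurrence for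
`qₙ` gives `qₙ₊₁ - α qₙ = ᾱ'^(n+1)` and `qₙ₊₁ - ᾱ' qₙ = α^(n+1)`. The second identity shows
`Bₙ = α^(n+1) / qₙ`, so the right-hand side is `a / α^(2n+1)`. Substituting
`qₙ₊₁ = a qₙ + qₙ₋₁` turns the quadratic form into `a ᾱ' (qₙ - α qₙ₋₁)² = a ᾱ' ᾱ'^(2n)`, whose
absolute value is again `a / α^(2n+1)` because `|ᾱ'| = α⁻¹`: the estimate is an equality.
-/

lemma metallic_pos (a : ℝ) : 0 < (a + √(a ^ 2 + 4)) / 2 := by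
  have : |a| < √(a ^ 2 + 4) := by
    rw [← Real.sqrt_sq_eq_abs]
    exact Real.sqrt_lt_sqrt (sq_nonneg a) (by linarith)
  linarith [neg_abs_le a]

lemma metallic_mul_conj (a : ℝ) : (a + √(a ^ 2 + 4)) / 2 * ((a - √(a ^ 2 + 4)) / 2) = -1 := by
  have := Real.sq_sqrt (show (0 : ℝ) ≤ a ^ 2 + 4 by positivity)
  linear_combination -this / 4

section Recurrence

variable {R : Type*} [CommRing R] {a β γ : R} {q : ℕ → R}

lemma sub_mul_eq_pow_of_recurrence (hsum : β + γ = a) (hprod : β * γ = -1)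
    (hq0 : q 0 = 1) (hq1 : q 1 = a) (hrec : ∀ n, q (n + 2) = a * q (n + 1) + q n) (n : ℕ) :
    q (n + 1) - β * q n = γ ^ (n + 1) := by
  induction n with
  | zero => linear_combination hq1 - hsum - hq0 * β
  | succ n ih => linear_combination hrec n + γ * ih - q (n + 1) * hsum + q n * hprod

lemma quadratic_form_eq (hsum : β + γ = a) (hprod : β * γ = -1) (u v : R) :
    (a * u + v) ^ 2 - a * β * u ^ 2 - β ^ 2 * v ^ 2 = a * γ * (u - β * v) ^ 2 := by
  linear_combination (-a * u ^ 2 - β * v ^ 2) * hsum + (2 * a * u * v + v ^ 2 - a * β * v ^ 2) * hprod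

end Recurrence

lemma pos_of_recurrence {a : ℝ} {q : ℕ → ℝ} (ha : 0 ≤ a) (hq0 : 0 < q 0) (hq1 : 0 < q 1)
    (hrec : ∀ n, q (n + 2) = a * q (n + 1) + q n) (n : ℕ) : 0 < q n := by
  suffices ∀ n, 0 < q n ∧ 0 < q (n + 1) from (this n).1
  intro n
  induction n with
  | zero => exact ⟨hq0, hq1⟩
  | succ n ih => exact ⟨ih.2, by rw [hrec]; nlinarith [ih.1, ih.2]⟩

lemma abs_sub_div_of_sub_mul_eq {x y γ c : ℝ} (hy : 0 < y) (hc : 0 ≤ c) (h : x - γ * y = c) :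
    |γ - x / y| = c / y := by
  have : γ - x / y = -(c / y) := by field_simp; linear_combination -h
  rw [this, abs_neg, abs_of_nonneg (by positivity)]

/-- Watson's estimate for the metallic mean `α = (a + √(a²+4))/2`: with convergent
denominators `qₙ` (satisfying `q₀ = 1`, `q₁ = a`, `qₙ₊₂ = a qₙ₊₁ + qₙ` and `pₙ = qₙ₊₁`),
one has `|q_{n+1}² − aα qₙ² − α² q_{n−1}²| ≤ (α + ᾱ')/(qₙ q_{n−1} Bₙ B_{n−1})`
where `ᾱ' = (a − √(a²+4))/2` and `Bₙ = |ᾱ' − pₙ/qₙ|`. -/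
theorem watson_estimate (a : ℕ) (ha : 1 ≤ a) (α ᾱ' : ℝ)
    (hα : α = ((a : ℝ) + Real.sqrt ((a : ℝ) ^ 2 + 4)) / 2)
    (hᾱ' : ᾱ' = ((a : ℝ) - Real.sqrt ((a : ℝ) ^ 2 + 4)) / 2)
    (q : ℕ → ℝ) (hq0 : q 0 = 1) (hq1 : q 1 = (a : ℝ))
    (hrec : ∀ n : ℕ, q (n + 2) = (a : ℝ) * q (n + 1) + q n)
    (p : ℕ → ℝ) (hp : ∀ n : ℕ, p n = q (n + 1))
    (B : ℕ → ℝ) (hB : ∀ n : ℕ, B n = |ᾱ' - p n / q n|)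
    (n : ℕ) (hn : 1 ≤ n) :
    |(q (n + 1)) ^ 2 - (a : ℝ) * α * (q n) ^ 2 - α ^ 2 * (q (n - 1)) ^ 2| ≤
      (α + ᾱ') / (q n * q (n - 1) * B n * B (n - 1)) := by
  obtain ⟨k, rfl⟩ := Nat.exists_eq_add_of_le' hn
  have hsum : α + ᾱ' = a := by rw [hα, hᾱ']; ring
  have hprod : α * ᾱ' = -1 := by rw [hα, hᾱ']; exact metallic_mul_conj a
  have hαpos : 0 < α := hα ▸ metallic_pos a
  have hqpos := pos_of_recurrence (by positivity) (by rw [hq0]; norm_num)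
    (by rw [hq1]; exact_mod_cast ha) hrec
  have hBpow : ∀ m, B m = α ^ (m + 1) / q m := fun m => by
    rw [hB, hp]
    exact abs_sub_div_of_sub_mul_eq (hqpos m) (by positivity) <| sub_mul_eq_pow_of_recurrence
      (by rwa [add_comm]) (by rwa [mul_comm]) hq0 hq1 hrec m
  have habs : |ᾱ'| = α⁻¹ := by
    refine eq_inv_of_mul_eq_one_left ?_
    rw [← abs_of_pos hαpos, ← abs_mul, mul_comm, hprod, abs_neg, abs_one]
  rw [Nat.add_sub_cancel, hrec, quadratic_form_eq hsum hprod,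
    sub_mul_eq_pow_of_recurrence hsum hprod hq0 hq1 hrec, hBpow, hBpow, hsum]
  apply le_of_eq
  rw [abs_mul, abs_mul, abs_pow, abs_pow, habs, Nat.abs_cast]
  simp only [inv_pow]
  field_simp [hαpos.ne', (hqpos k).ne', (hqpos (k + 1)).ne']
  ring
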